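/- For every natural number n ≥ 2, ψ^{(n-1)}(1/4) + ψ^{(n-1)}(3/4) = (-1)^n · 2^n · (2^n - 1) · (n-1)! · ζ(n); formally, iteratedDeriv n (fun x : ℝ => Real.log (Real.Gamma x)) (1/4) + iteratedDeriv n (fun x : ℝ => Real.log (Real.Gamma x)) (3/4) = (-1)^n * (2^n : ℝ) * ((2^n : ℝ) - 1) * (n-1)! * ∑' k : ℕ, (1 : ℝ) / (k+1)^n. -/

import Mathlib

/-!
Differentiating the Bohr–Mollerup limit `log Γ(x) = lim (x log N + log N! - ∑_{m ≤ N} log (x + m))`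
termwise (the derivatives converge locally uniformly) gives `(log Γ)' = ψ` with
`ψ(x) = -γ + ∑ (1/(1+m) - 1/(x+m))`, hence `(log Γ)^{(n)}(x) = (-1)^n (n-1)! ζ(n, x)` for `n ≥ 2`,
where `ζ(n, x) = ∑ 1/(x+m)^n` is the Hurwitz zeta function. Splitting `ζ(n, x)` over even and
odd `m` gives the duplication formula `ζ(n, x/2) + ζ(n, (x+1)/2) = 2^n ζ(n, x)`; at `x = 1/2` and
`x = 1` it yields `ζ(n, 1/4) + ζ(n, 3/4) = 2^n ζ(n, 1/2) = 2^n (2^n - 1) ζ(n)`.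
-/

open Real Filter Topology Set

noncomputable def hurwitzSeries (k : ℕ) (x : ℝ) : ℝ := ∑' m : ℕ, 1 / (x + m) ^ k

noncomputable def digammaSeries (x : ℝ) : ℝ :=
  -eulerMascheroniConstant + ∑' m : ℕ, (1 / (1 + m) - 1 / (x + m))

lemma summable_one_div_add_pow (x : ℝ) {k : ℕ} (hk : 2 ≤ k) :
    Summable fun m : ℕ => 1 / (x + m) ^ k := by
  have h := (summable_one_div_nat_add_rpow x k).mpr (by exact_mod_cast hk)
  refine Summable.of_norm (h.congr fun m => ?_)
  rw [rpow_natCast, norm_div, norm_one, norm_pow, norm_eq_abs, add_comm]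

lemma hurwitzSeries_div_two_add_hurwitzSeries_add_one_div_two {k : ℕ} (hk : 2 ≤ k) (x : ℝ) :
    hurwitzSeries k (x / 2) + hurwitzSeries k ((x + 1) / 2) = 2 ^ k * hurwitzSeries k x := by
  have hs := summable_one_div_add_pow x hk
  have half (y : ℝ) : hurwitzSeries k (y / 2) = 2 ^ k * ∑' m : ℕ, 1 / (y + 2 * m) ^ k := by
    rw [hurwitzSeries, ← tsum_mul_left]
    refine tsum_congr fun m => ?_
    rw [show y / 2 + m = (y + 2 * m) / 2 by ring, div_pow, one_div_div, div_eq_mul_one_div]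
  have split := tsum_even_add_odd (f := fun m : ℕ => 1 / (x + m) ^ k)
    (hs.comp_injective (mul_right_injective₀ two_ne_zero))
    (hs.comp_injective ((add_left_injective 1).comp (mul_right_injective₀ two_ne_zero)))
  rw [half, half, ← mul_add, hurwitzSeries, ← split]
  push_cast
  ring_nf

lemma hasDerivAt_one_div_add_pow (k : ℕ) {c y : ℝ} (h : y + c ≠ 0) :
    HasDerivAt (fun y : ℝ => 1 / (y + c) ^ k) (-k * (1 / (y + c) ^ (k + 1))) y := by
  simp only [one_div]
  refine (((hasDerivAt_pow k (y + c)).comp_add_const y c).fun_inv (pow_ne_zero k h)).congr_deriv ?_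
  rcases k with _ | k
  · simp
  · rw [Nat.add_sub_cancel]
    field_simp
    ring

lemma hasDerivAt_hurwitzSeries {k : ℕ} (hk : 2 ≤ k) {x : ℝ} (hx : 0 < x) :
    HasDerivAt (hurwitzSeries k) (-k * hurwitzSeries (k + 1) x) x := by
  have hx2 : x ∈ Ioi (x / 2) := by simp only [mem_Ioi]; linarith
  rw [hurwitzSeries, ← tsum_mul_left]
  refine hasDerivAt_tsum_of_isPreconnected (u := fun m : ℕ => k * (1 / (x / 2 + m) ^ (k + 1)))
    ((summable_one_div_add_pow _ (by omega)).mul_left _) isOpen_Ioi isPreconnected_Ioi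
    (fun m y hy => hasDerivAt_one_div_add_pow k ?_) (fun m y hy => ?_) hx2
    (summable_one_div_add_pow x hk) hx2
  · have : 0 < y := by simp only [mem_Ioi] at hy; linarith
    positivity
  · have : 0 < x / 2 := by positivity
    have : 0 < y := this.trans hy
    rw [norm_mul, norm_neg, Real.norm_natCast, norm_of_nonneg (by positivity)]
    gcongr
    exact hy.le

lemma summable_one_div_one_add_sub_one_div_add {x : ℝ} (hx : 0 < x) :
    Summable fun m : ℕ => 1 / (1 + m) - 1 / (x + m) := by
  refine Summable.of_norm_bounded (((summable_one_div_add_pow 1 le_rfl).add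
    (summable_one_div_add_pow x le_rfl)).mul_left |x - 1|) fun m => ?_
  have hp : (0 : ℝ) < 1 + m := by positivity
  have hq : 0 < x + m := by positivity
  have : 1 / (1 + m) - 1 / (x + m) = (x - 1) * (1 / (1 + m) * (1 / (x + m))) := by
    field_simp
    ring
  rw [this, norm_mul, norm_eq_abs, norm_of_nonneg (by positivity)]
  refine mul_le_mul_of_nonneg_left ?_ (abs_nonneg _)
  rw [← one_div_pow, ← one_div_pow]
  have hpq : 0 < 1 / (1 + m) * (1 / (x + m)) := by positivity
  nlinarith [sq_nonneg (1 / (1 + (m : ℝ)) - 1 / (x + m))]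

lemma abs_sub_one_div_add_le {a b y c d : ℝ} (ha : 0 < a + c) (hay : a ≤ y) (hyb : y ≤ b) :
    |d - 1 / (y + c)| ≤ |d - 1 / (a + c)| + |d - 1 / (b + c)| := by
  have hya : 1 / (y + c) ≤ 1 / (a + c) := one_div_le_one_div_of_le ha (by linarith)
  have hby : 1 / (b + c) ≤ 1 / (y + c) := one_div_le_one_div_of_le (by linarith) (by linarith)
  exact (abs_le_max_abs_abs (by linarith) (by linarith)).trans
    (max_le_add_of_nonneg (abs_nonneg _) (abs_nonneg _))

lemma hasDerivAt_digammaSeries {x : ℝ} (hx : 0 < x) :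
    HasDerivAt digammaSeries (hurwitzSeries 2 x) x := by
  have hx2 : x ∈ Ioi (x / 2) := by simp only [mem_Ioi]; linarith
  refine HasDerivAt.const_add _ (hasDerivAt_tsum_of_isPreconnected
    (g := fun (m : ℕ) (y : ℝ) => 1 / (1 + (m : ℝ)) - 1 / (y + m))
    (g' := fun (m : ℕ) (y : ℝ) => 1 / (y + (m : ℝ)) ^ 2)
    (u := fun m : ℕ => 1 / (x / 2 + m) ^ 2) (summable_one_div_add_pow _ le_rfl) isOpen_Ioi
    isPreconnected_Ioi (fun m y hy => ?_) (fun m y hy => ?_) hx2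
    (summable_one_div_one_add_sub_one_div_add hx) hx2)
  all_goals have : 0 < x / 2 := by positivity
  all_goals have : 0 < y := this.trans hy
  · simpa using (hasDerivAt_one_div_add_pow 1 (c := m) (y := y) (by positivity)).const_sub
      (1 / (1 + (m : ℝ)))
  · rw [norm_of_nonneg (by positivity)]
    gcongr
    exact hy.le

lemma tendsto_log_sub_sum_range_succ :
    Tendsto (fun N : ℕ => log N - ∑ m ∈ Finset.range (N + 1), 1 / (1 + (m : ℝ))) atTop
      (𝓝 (-eulerMascheroniConstant)) := by
  have h := tendsto_harmonic_sub_log.neg.sub (tendsto_one_div_add_atTop_nhds_zero_nat (𝕜 := ℝ))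
  rw [sub_zero] at h
  refine h.congr fun N => ?_
  simp only [Finset.sum_range_succ, harmonic]
  push_cast
  ring_nf

lemma hasDerivAt_logGammaSeq (N : ℕ) {y : ℝ} (hy : 0 < y) :
    HasDerivAt (fun y => BohrMollerup.logGammaSeq y N)
      (log N - ∑ m ∈ Finset.range (N + 1), 1 / (y + m)) y := by
  refine ((hasDerivAt_mul_const (log N)).add_const _).sub (HasDerivAt.fun_sum fun m _ => ?_)
  simpa using ((hasDerivAt_id y).add_const (m : ℝ)).log (by positivity)

lemma tendstoUniformlyOn_deriv_logGammaSeq {a b : ℝ} (ha : 0 < a) (hab : a ≤ b) :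
    TendstoUniformlyOn (fun (N : ℕ) (y : ℝ) => log N - ∑ m ∈ Finset.range (N + 1), 1 / (y + m))
      digammaSeries atTop (Ioo a b) := by
  have hseries : TendstoUniformlyOn
      (fun (N : ℕ) (y : ℝ) => ∑ m ∈ Finset.range (N + 1), (1 / (1 + (m : ℝ)) - 1 / (y + m)))
      (fun y => ∑' m : ℕ, (1 / (1 + (m : ℝ)) - 1 / (y + m))) atTop (Ioo a b) := by
    have hu := ((summable_one_div_one_add_sub_one_div_add ha).abs).add
      (summable_one_div_one_add_sub_one_div_add (ha.trans_le hab)).abs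
    have hM := tendstoUniformlyOn_tsum (f := fun (m : ℕ) (y : ℝ) => 1 / (1 + (m : ℝ)) - 1 / (y + m))
      (s := Ioo a b) hu fun m y hy => by
        rw [norm_eq_abs]
        exact abs_sub_one_div_add_le (c := m) (by positivity) hy.1.le hy.2.le
    exact fun v hv => (tendsto_finset_range.comp (tendsto_add_atTop_nat 1)).eventually (hM v hv)
  refine ((tendsto_log_sub_sum_range_succ.tendstoUniformlyOn_const _).add hseries).congr ?_
  filter_upwards with N y _
  simp only [Pi.add_apply, Finset.sum_sub_distrib]
  ring

lemma hasDerivAt_log_Gamma {x : ℝ} (hx : 0 < x) :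
    HasDerivAt (fun y => log (Gamma y)) (digammaSeries x) x := by
  have hx2 : 0 < x / 2 := by positivity
  exact hasDerivAt_of_tendstoUniformlyOn isOpen_Ioo
    (tendstoUniformlyOn_deriv_logGammaSeq (b := x + 1) hx2 (by linarith))
    (Eventually.of_forall fun N y hy => hasDerivAt_logGammaSeq N (hx2.trans hy.1))
    (fun y hy => BohrMollerup.tendsto_log_gamma (hx2.trans hy.1))
    ⟨by linarith, by linarith⟩

lemma iteratedDeriv_log_Gamma {n : ℕ} (hn : 2 ≤ n) {x : ℝ} (hx : 0 < x) :
    iteratedDeriv n (fun y => log (Gamma y)) x =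
      (-1) ^ n * (n - 1).factorial * hurwitzSeries n x := by
  induction n, hn using Nat.le_induction generalizing x with
  | base =>
    have h : deriv (fun y => log (Gamma y)) =ᶠ[𝓝 x] digammaSeries :=
      (eventually_gt_nhds hx).mono fun y hy => (hasDerivAt_log_Gamma hy).deriv
    rw [iteratedDeriv_succ, iteratedDeriv_one, h.deriv_eq, (hasDerivAt_digammaSeries hx).deriv]
    norm_num
  | succ n hn ih =>
    have h : iteratedDeriv n (fun y => log (Gamma y)) =ᶠ[𝓝 x]
        fun y => (-1) ^ n * (n - 1).factorial * hurwitzSeries n y :=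
      (eventually_gt_nhds hx).mono fun y hy => ih hy
    rw [iteratedDeriv_succ, h.deriv_eq, ((hasDerivAt_hurwitzSeries hn hx).const_mul _).deriv]
    obtain ⟨k, rfl⟩ : ∃ k, n = k + 1 := ⟨n - 1, by omega⟩
    simp only [Nat.add_sub_cancel, Nat.factorial_succ]
    push_cast
    ring

theorem polygamma_quarter_sum_zeta (n : ℕ) (hn : 2 ≤ n) :
    iteratedDeriv n (fun x : ℝ => Real.log (Real.Gamma x)) (1/4) +
      iteratedDeriv n (fun x : ℝ => Real.log (Real.Gamma x)) (3/4) =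
      (-1)^n * (2^n : ℝ) * ((2^n : ℝ) - 1) * (Nat.factorial (n-1) : ℝ) *
        ∑' k : ℕ, (1 : ℝ) / (k+1)^n := by
  have hzeta : ∑' k : ℕ, (1 : ℝ) / (k + 1) ^ n = hurwitzSeries n 1 := by
    simp only [hurwitzSeries, add_comm]
  have h1 : hurwitzSeries n (1 / 2) + hurwitzSeries n 1 = 2 ^ n * hurwitzSeries n 1 := by
    convert hurwitzSeries_div_two_add_hurwitzSeries_add_one_div_two hn 1 using 3
    norm_num
  have h2 :
      hurwitzSeries n (1 / 4) + hurwitzSeries n (3 / 4) = 2 ^ n * hurwitzSeries n (1 / 2) := by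
    convert hurwitzSeries_div_two_add_hurwitzSeries_add_one_div_two hn (1 / 2) using 3 <;> norm_num
  rw [iteratedDeriv_log_Gamma hn (by norm_num), iteratedDeriv_log_Gamma hn (by norm_num), hzeta]
  linear_combination (-1) ^ n * ((n - 1).factorial : ℝ) * (h2 + 2 ^ n * h1)
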